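/- Let ψ′(0+) > −∞ and suppose W is continuously differentiable on (0,∞). Let C_U, C_D ∈ ℝ satisfy C_U + C_D > 0, let f : ℝ → ℝ be continuous and piecewise continuously differentiable, set f̃(x) = f(x) + C_U q x and Λ(a,x) = C_D + C_U + φ_a(x; f̃′). Fix a* < b* with Λ(a*, b*) = 0 and suppose Λ(a*, x) ≥ 0 for every x ∈ [a*, b*]. Define v(x) = −C_U R(x−a*) + (f(a*)/q) Z(x−a*) − φ_{a*}(x; f) for x ≤ b*, and v(x) = v(b*) + C_D(x−b*) for x > b*. Then v′(x) = −C_U for x < a*, v′(x) = C_D − Λ(a*, x) for a* < x < b*, v′(x) = C_D for x > b*, and the right-derivative of v satisfies v′₊(x) ≤ C_D for every x ∈ ℝ. -/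

import Mathlib

open MeasureTheory Set Filter Topology

noncomputable section

/-- The Laplace exponent of a spectrally negative Lévy process with data `(γ, σ, ν)`. -/
def psi (γ σ : ℝ) (ν : Measure ℝ) (s : ℝ) : ℝ :=
  γ * s + σ ^ 2 * s ^ 2 / 2 +
    ∫ z in Set.Iio (0 : ℝ), (Real.exp (s * z) - 1 - s * z * (if -1 < z then (1:ℝ) else 0)) ∂ν

/-- `Φ(q) = sup {λ ≥ 0 : ψ(λ) = q}`. -/
def PhiQ (γ σ : ℝ) (ν : Measure ℝ) (q : ℝ) : ℝ :=
  sSup {l : ℝ | 0 ≤ l ∧ psi γ σ ν l = q}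

/-- `Z^{(q)}(x) = 1 + q ∫₀ˣ W(y) dy`. -/
def Zfun (q : ℝ) (W : ℝ → ℝ) (x : ℝ) : ℝ := 1 + q * ∫ y in (0:ℝ)..x, W y

/-- `Z̄^{(q)}(x) = ∫₀ˣ Z(z) dz`. -/
def Zbar (q : ℝ) (W : ℝ → ℝ) (x : ℝ) : ℝ := ∫ z in (0:ℝ)..x, Zfun q W z

/-- `R^{(q)}(x) = Z̄(x) + ψ'(0+)/q`. -/
def Rfun (q psi'0 : ℝ) (W : ℝ → ℝ) (x : ℝ) : ℝ := Zbar q W x + psi'0 / q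

/-- `Ψ(s; h) = ∫_s^∞ e^{-Φ(q)(y-s)} h(y) dy`. -/
def PsiInt (Φq s : ℝ) (h : ℝ → ℝ) : ℝ := ∫ y in Set.Ioi s, Real.exp (-Φq * (y - s)) * h y

/-- `φ_s(x; h) = ∫_s^x W(x-y) h(y) dy`. -/
def phiInt (W : ℝ → ℝ) (s x : ℝ) (h : ℝ → ℝ) : ℝ := ∫ y in s..x, W (x - y) * h y

/-- Integrand of the nonlocal part of the generator `L`. -/
def genInt (h : ℝ → ℝ) (x z : ℝ) : ℝ :=
  h (x + z) - h x - deriv h x * z * (if -1 < z then (1:ℝ) else 0)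

/-- The generator `L` of the Lévy process, applied to a sufficiently smooth function. -/
def Lgen (γ σ : ℝ) (ν : Measure ℝ) (h : ℝ → ℝ) (x : ℝ) : ℝ :=
  γ * deriv h x + σ ^ 2 / 2 * deriv (deriv h) x + ∫ z in Set.Iio (0 : ℝ), genInt h x z ∂ν

/-- Candidate value function for two-sided singular control with barriers `a < b`:
`v(x) = -C_U R(x-a) + (f(a)/q) Z(x-a) - φ_a(x; f)` for `x ≤ b`, extended linearly with
slope `C_D` above `b`. -/
def vTS (q psi'0 C_U C_D a b : ℝ) (W f : ℝ → ℝ) (x : ℝ) : ℝ :=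
  if x ≤ b then
    -C_U * Rfun q psi'0 W (x - a) + f a / q * Zfun q W (x - a) - phiInt W a x f
  else
    (-C_U * Rfun q psi'0 W (b - a) + f a / q * Zfun q W (b - a) - phiInt W a b f)
      + C_D * (x - b)


/-!
With `W̄(x) = ∫₀ˣ W`, integration by parts gives
`∫_a^x W(x - y) f(y) dy = f(a) W̄(x - a) + ∫_a^x W̄(x - y) f'(y) dy`, and since `Z = 1 + q W̄`,
below `b` the value function is `-C_U R(x - a) + f(a)/q - ∫_a^x W̄(x - y) f'(y) dy`.
Because `W̄` vanishes on `(-∞, 0]`, the upper limit `x` of this integral may be frozen at any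
`c ≥ x`; `W̄` is locally Lipschitz with derivative `W` off `0`, so differentiating under the
integral sign gives `v'(x) = -C_U Z(x - a) - φ_a(x; f')` for every `x < b`. This is `-C_U` left
of `a` and `C_D - Λ(a, x) ≤ C_D` on `(a, b)`; above `b`, `v` is affine with slope `C_D`.
-/
open intervalIntegral

theorem MeasureTheory.IntegrableOn.of_mul_left_of_le {α : Type*} [MeasurableSpace α]
    {μ : Measure α} {s : Set α} {w g : α → ℝ} {m : ℝ} (hm : 0 < m) (hs : MeasurableSet s)
    (hw : Measurable w) (hwm : ∀ y ∈ s, m ≤ w y)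
    (hwg : IntegrableOn (fun y => w y * g y) s μ) :
    IntegrableOn g s μ := by
  refine IntegrableOn.congr_fun
    (Integrable.bdd_mul (c := m⁻¹) hwg hw.inv.aestronglyMeasurable ?_) (fun y hy => ?_) hs
  · refine (ae_restrict_iff' hs).2 (Eventually.of_forall fun y hy => ?_)
    rw [Pi.inv_apply, norm_inv, Real.norm_eq_abs, abs_of_pos (hm.trans_le (hwm y hy))]
    exact inv_anti₀ hm (hwm y hy)
  · simp [inv_mul_cancel_left₀ (hm.trans_le (hwm y hy)).ne']

section Kernel

variable {G g h : ℝ → ℝ} {a b c x : ℝ}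

theorem phiInt_of_le (hG : ∀ s < 0, G s = 0) (hxa : x ≤ a) : phiInt G a x h = 0 := by
  rw [phiInt, integral_symm, integral_of_le hxa, neg_eq_zero]
  refine setIntegral_eq_zero_of_forall_eq_zero fun t ht => ?_
  rw [hG _ (by linarith [ht.1]), zero_mul]

theorem phiInt_eq_intervalIntegral (hG : ∀ s < 0, G s = 0) (hac : a ≤ c) (hxc : x ≤ c)
    (hi : IntegrableOn (fun t => G (x - t) * h t) (Ioc a c)) :
    phiInt G a x h = ∫ t in a..c, G (x - t) * h t := by
  have htail : ∀ d, x ≤ d → d ≤ c → ∫ t in d..c, G (x - t) * h t = 0 := fun d hxd hdc => by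
    rw [integral_of_le hdc]
    refine setIntegral_eq_zero_of_forall_eq_zero fun t ht => ?_
    rw [hG _ (by linarith [ht.1]), zero_mul]
  rcases le_total x a with hxa | hax
  · rw [phiInt_of_le hG hxa, htail a hxa hac]
  · have hi' : ∀ d e, a ≤ d → e ≤ c → d ≤ e →
        IntervalIntegrable (fun t => G (x - t) * h t) volume d e := fun d e had hec hde =>
      (intervalIntegrable_iff_integrableOn_Ioc_of_le hde).2 (hi.mono_set (Ioc_subset_Ioc had hec))
    rw [phiInt, ← integral_add_adjacent_intervals (hi' a x le_rfl hxc hax)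
      (hi' x c hax le_rfl hxc), htail x le_rfl hxc, add_zero]

theorem integrableOn_comp_sub_mul (hG : Monotone G) (hG0 : ∀ s, 0 ≤ G s)
    (hh : IntegrableOn h (Ioc a c)) (x : ℝ) :
    IntegrableOn (fun t => G (x - t) * h t) (Ioc a c) := by
  refine hh.bdd_mul (c := G (x - a))
    (hG.measurable.comp (measurable_const.sub measurable_id)).aestronglyMeasurable ?_
  refine (ae_restrict_iff' measurableSet_Ioc).2 (Eventually.of_forall fun t ht => ?_)
  rw [Real.norm_eq_abs, abs_of_nonneg (hG0 _)]
  exact hG (by linarith [ht.1])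

theorem hasDerivAt_intervalIntegral_comp_sub_mul {K k : ℝ → ℝ} {L : NNReal} {x₀ : ℝ}
    (hac : a ≤ c) (hx₀ : x₀ < c) (hK : Continuous K) (hKL : LipschitzOnWith L K (Iic (c - a)))
    (hKk : ∀ s ≠ 0, HasDerivAt K (k s) s) (hk : Measurable k) (hh : IntegrableOn h (Ioc a c)) :
    HasDerivAt (fun x => ∫ t in a..c, K (x - t) * h t)
      (∫ t in a..c, k (x₀ - t) * h t) x₀ := by
  simp only [integral_of_le hac]
  have hKx : ∀ x, Continuous fun t => K (x - t) := fun x =>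
    hK.comp (continuous_const.sub continuous_id)
  refine (hasDerivAt_integral_of_dominated_loc_of_lip (Iio_mem_nhds hx₀)
    (F := fun x t => K (x - t) * h t) (bound := fun t => L * |h t|)
    (Eventually.of_forall fun x => (hKx x).aestronglyMeasurable.mul hh.aestronglyMeasurable)
    ?_ ?_ ?_ (hh.norm.const_mul L) ?_).2
  · have hhIcc : IntegrableOn h (Icc a c) :=
      (integrableOn_Icc_iff_integrableOn_Ioc (f := h)).mpr hh
    exact (IntegrableOn.continuousOn_mul (hKx x₀).continuousOn hhIcc isCompact_Icc).mono_set
      Ioc_subset_Icc_self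
  · exact (hk.comp (measurable_const.sub measurable_id)).aestronglyMeasurable.mul
      hh.aestronglyMeasurable
  · refine (ae_restrict_iff' measurableSet_Ioc).2 (Eventually.of_forall fun t ht => ?_)
    refine LipschitzOnWith.of_dist_le_mul fun x hx y hy => ?_
    have hmem : ∀ z ∈ Iio c, z - t ∈ Iic (c - a) := fun z hz => by
      simp only [mem_Iic]; linarith [ht.1, mem_Iio.1 hz]
    have hKxy := hKL.dist_le_mul _ (hmem x hx) _ (hmem y hy)
    rw [Real.dist_eq, Real.dist_eq, sub_sub_sub_cancel_right] at hKxy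
    rw [Real.dist_eq, Real.dist_eq, ← sub_mul, Real.coe_nnabs,
      abs_of_nonneg (by positivity : (0:ℝ) ≤ L * |h t|), abs_mul]
    nlinarith [abs_nonneg (h t)]
  · filter_upwards [Measure.ae_ne _ x₀] with t ht
    simpa using
      ((hKk _ (sub_ne_zero.2 ht.symm)).comp x₀ ((hasDerivAt_id x₀).sub_const t)).mul_const (h t)

theorem integrableOn_of_phiInt_ne_zero (hab : a ≤ b) (h : phiInt G a b g ≠ 0) :
    IntegrableOn (fun y => G (b - y) * g y) (Ioc a b) := by
  by_contra hni
  exact h (by rw [phiInt, integral_of_le hab, integral_undef hni])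

theorem integrableOn_of_integrableOn_kernel_mul (hG : Monotone G) {z : ℝ} (hzb : z ≤ b)
    (hpos : 0 < G (b - z)) (hi : IntegrableOn (fun y => G (b - y) * g y) (Ioc a b)) :
    IntegrableOn g (Ioc a z) :=
  (hi.mono_set (Ioc_subset_Ioc_right hzb)).of_mul_left_of_le hpos measurableSet_Ioc
    (hG.measurable.comp (measurable_const.sub measurable_id))
    fun _ hy => hG (sub_le_sub_left hy.2 b)

end Kernel

def Wbar (W : ℝ → ℝ) (x : ℝ) : ℝ := ∫ y in (0:ℝ)..x, W y

section ScaleFunction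

variable {W : ℝ → ℝ}

theorem monotone_of_strictMonoOn_Ici (hW0 : 0 ≤ W 0) (hWneg : ∀ x < 0, W x = 0)
    (hWmono : StrictMonoOn W (Ici 0)) : Monotone W := by
  intro x y hxy
  rcases lt_or_ge x 0 with hx | hx
  · rcases lt_or_ge y 0 with hy | hy
    · rw [hWneg x hx, hWneg y hy]
    · rw [hWneg x hx]
      exact hW0.trans (hWmono.monotoneOn self_mem_Ici hy hy)
  · exact hWmono.monotoneOn hx (hx.trans hxy) hxy

theorem nonneg_of_monotone (hWm : Monotone W) (hWneg : ∀ x < 0, W x = 0) (x : ℝ) :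
    0 ≤ W x := by
  rw [← hWneg (min x (-1)) (by simp)]
  exact hWm (min_le_left _ _)

theorem Wbar_of_nonpos (hWneg : ∀ x < 0, W x = 0) {t : ℝ} (ht : t ≤ 0) : Wbar W t = 0 := by
  rw [Wbar, integral_symm, integral_of_le ht, integral_Ioc_eq_integral_Ioo, neg_eq_zero]
  exact setIntegral_eq_zero_of_forall_eq_zero fun u hu => hWneg u hu.2

theorem Wbar_sub_Wbar (hWm : Monotone W) (s t : ℝ) : Wbar W t - Wbar W s = ∫ u in s..t, W u :=
  integral_interval_sub_left hWm.intervalIntegrable hWm.intervalIntegrable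

theorem continuous_Wbar (hWm : Monotone W) : Continuous (Wbar W) :=
  continuous_primitive (fun _ _ => hWm.intervalIntegrable) 0

theorem monotone_Wbar (hWm : Monotone W) (hWneg : ∀ x < 0, W x = 0) : Monotone (Wbar W) :=
  fun s t hst => sub_nonneg.1 <| (Wbar_sub_Wbar hWm s t).symm ▸
    integral_nonneg hst fun u _ => nonneg_of_monotone hWm hWneg u

theorem Wbar_nonneg (hWm : Monotone W) (hWneg : ∀ x < 0, W x = 0) (t : ℝ) : 0 ≤ Wbar W t :=
  Wbar_of_nonpos hWneg (min_le_right t 0) ▸ monotone_Wbar hWm hWneg (min_le_left t 0)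

theorem lipschitzOnWith_Wbar (hWm : Monotone W) (hWneg : ∀ x < 0, W x = 0) (c : ℝ) :
    LipschitzOnWith (W c).toNNReal (Wbar W) (Iic c) := by
  refine LipschitzOnWith.of_dist_le' fun s hs t ht => ?_
  rw [dist_comm, Real.dist_eq, Wbar_sub_Wbar hWm, Real.dist_eq, abs_sub_comm]
  refine (Real.norm_eq_abs _ ▸ intervalIntegral.norm_integral_le_of_norm_le_const (C := W c)
    fun u hu => ?_)
  rw [Real.norm_eq_abs, abs_of_nonneg (nonneg_of_monotone hWm hWneg u)]
  exact hWm (hu.2.trans (max_le hs ht))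

theorem hasDerivAt_Wbar (hWm : Monotone W) (hWneg : ∀ x < 0, W x = 0)
    (hWc : ContinuousOn W (Ici 0)) {t : ℝ} (ht : t ≠ 0) : HasDerivAt (Wbar W) (W t) t := by
  refine integral_hasDerivAt_right hWm.intervalIntegrable
    hWm.measurable.stronglyMeasurable.stronglyMeasurableAtFilter ?_
  rcases ht.lt_or_gt with ht | ht
  · exact continuousAt_const.congr <|
      eventually_of_mem (Iio_mem_nhds ht) fun u hu => (hWneg u hu).symm
  · exact hWc.continuousAt (Ici_mem_nhds ht)

end ScaleFunction

section Convolution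

variable {W h : ℝ → ℝ} {a c x : ℝ}

theorem phiInt_const (r : ℝ) : phiInt W a x (fun _ => r) = r * Wbar W (x - a) := by
  rw [phiInt, intervalIntegral.integral_mul_const, integral_comp_sub_left (fun u => W u), sub_self,
    Wbar, mul_comm]

theorem phiInt_add_const (hWm : Monotone W) (hWneg : ∀ x < 0, W x = 0) (hax : a ≤ x)
    (hh : IntegrableOn h (Ioc a x)) (r : ℝ) :
    phiInt W a x (fun y => h y + r) = phiInt W a x h + r * Wbar W (x - a) := by
  have hi : ∀ g : ℝ → ℝ, IntegrableOn g (Ioc a x) →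
      IntervalIntegrable (fun t => W (x - t) * g t) volume a x := fun g hg =>
    (intervalIntegrable_iff_integrableOn_Ioc_of_le hax).2
      (integrableOn_comp_sub_mul hWm (nonneg_of_monotone hWm hWneg) hg x)
  simp only [phiInt, mul_add]
  rw [integral_add (hi h hh) (hi _ (integrableOn_const measure_Ioc_lt_top.ne)), ← phiInt_const]
  rfl

theorem phiInt_eq_mul_Wbar_add_phiInt_Wbar (hWm : Monotone W) (hWneg : ∀ x < 0, W x = 0)
    (hWc : ContinuousOn W (Ici 0)) {f f' : ℝ → ℝ} (hf : Continuous f)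
    (hf' : ∀ x, HasDerivWithinAt f (f' x) (Ici x) x) (hax : a ≤ x)
    (hint : IntegrableOn f' (Ioc a x)) :
    phiInt W a x f = f a * Wbar W (x - a) + phiInt (Wbar W) a x f' := by
  have hu : ∀ t ∈ Ioo (min a x) (max a x),
      HasDerivAt (fun t => Wbar W (x - t)) (-W (x - t)) t := fun t ht => by
    rw [min_eq_left hax, max_eq_right hax] at ht
    simpa [Function.comp_def] using (hasDerivAt_Wbar hWm hWneg hWc
      (sub_ne_zero.2 ht.2.ne')).comp t ((hasDerivAt_id t).const_sub x)
  have hparts := integral_mul_deriv_eq_deriv_mul_of_hasDeriv_right (u := fun t => Wbar W (x - t))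
    ((continuous_Wbar hWm).comp (continuous_const.sub continuous_id)).continuousOn
    hf.continuousOn (fun t ht => (hu t ht).hasDerivWithinAt)
    (fun t _ => (hf' t).mono Ioi_subset_Ici_self)
    (hWm.comp_antitone fun _ _ h => sub_le_sub_left h x).intervalIntegrable.neg
    ((intervalIntegrable_iff_integrableOn_Ioc_of_le hax).2 hint)
  simp only [sub_self, Wbar_of_nonpos hWneg le_rfl, zero_mul, zero_sub, neg_mul,
    intervalIntegral.integral_neg] at hparts
  rw [phiInt, phiInt, hparts]
  ring

theorem hasDerivAt_phiInt_Wbar (hWm : Monotone W) (hWneg : ∀ x < 0, W x = 0)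
    (hWc : ContinuousOn W (Ici 0)) {x₀ : ℝ} (hac : a ≤ c) (hx₀ : x₀ < c)
    (hh : IntegrableOn h (Ioc a c)) :
    HasDerivAt (fun x => phiInt (Wbar W) a x h) (phiInt W a x₀ h) x₀ := by
  have hWbar_neg : ∀ s < 0, Wbar W s = 0 := fun s hs => Wbar_of_nonpos hWneg hs.le
  rw [phiInt_eq_intervalIntegral hWneg hac hx₀.le
    (integrableOn_comp_sub_mul hWm (nonneg_of_monotone hWm hWneg) hh x₀)]
  refine (hasDerivAt_intervalIntegral_comp_sub_mul hac hx₀ (continuous_Wbar hWm)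
    (lipschitzOnWith_Wbar hWm hWneg (c - a)) (fun s hs => hasDerivAt_Wbar hWm hWneg hWc hs)
    hWm.measurable hh).congr_of_eventuallyEq ?_
  filter_upwards [Iic_mem_nhds hx₀] with x hx
  exact phiInt_eq_intervalIntegral hWbar_neg hac hx
    (integrableOn_comp_sub_mul (monotone_Wbar hWm hWneg) (Wbar_nonneg hWm hWneg) hh x)

end Convolution

section ZFunctions

variable {q : ℝ} {W : ℝ → ℝ}

theorem Zfun_eq_one_add_mul_Wbar (x : ℝ) : Zfun q W x = 1 + q * Wbar W x := rfl

theorem Zfun_of_nonpos (hWneg : ∀ x < 0, W x = 0) {t : ℝ} (ht : t ≤ 0) : Zfun q W t = 1 := by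
  rw [Zfun_eq_one_add_mul_Wbar, Wbar_of_nonpos hWneg ht, mul_zero, add_zero]

theorem hasDerivAt_Zbar (hWm : Monotone W) (t : ℝ) : HasDerivAt (Zbar q W) (Zfun q W t) t := by
  have hZ : Continuous (Zfun q W) :=
    continuous_const.add (continuous_const.mul (continuous_Wbar hWm))
  exact integral_hasDerivAt_right (hZ.intervalIntegrable 0 t)
    hZ.stronglyMeasurable.stronglyMeasurableAtFilter hZ.continuousAt

end ZFunctions

section ValueFunction

variable {q psi'0 C_U C_D a b : ℝ} {W f f' : ℝ → ℝ}

theorem vTS_eq_of_le (hq : q ≠ 0) (hWm : Monotone W) (hWneg : ∀ x < 0, W x = 0)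
    (hWc : ContinuousOn W (Ici 0)) (hf : Continuous f)
    (hf' : ∀ x, HasDerivWithinAt f (f' x) (Ici x) x) {x : ℝ} (hxb : x ≤ b)
    (hint : IntegrableOn f' (Ioc a x)) :
    vTS q psi'0 C_U C_D a b W f x =
      -C_U * Rfun q psi'0 W (x - a) + f a / q - phiInt (Wbar W) a x f' := by
  rw [vTS, if_pos hxb]
  rcases le_total x a with hxa | hax
  · rw [phiInt_of_le hWneg hxa, phiInt_of_le (fun s hs => Wbar_of_nonpos hWneg hs.le) hxa,
      Zfun_of_nonpos hWneg (sub_nonpos.2 hxa)]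
    ring
  · rw [phiInt_eq_mul_Wbar_add_phiInt_Wbar hWm hWneg hWc hf hf' hax hint,
      Zfun_eq_one_add_mul_Wbar]
    field_simp
    ring

theorem hasDerivAt_vTS_of_lt (hq : q ≠ 0) (hWm : Monotone W) (hWneg : ∀ x < 0, W x = 0)
    (hWc : ContinuousOn W (Ici 0)) (hf : Continuous f)
    (hf' : ∀ x, HasDerivWithinAt f (f' x) (Ici x) x) (hab : a < b)
    (hint : ∀ z < b, IntegrableOn f' (Ioc a z)) {x₀ : ℝ} (hx₀ : x₀ < b) :
    HasDerivAt (vTS q psi'0 C_U C_D a b W f)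
      (-C_U * Zfun q W (x₀ - a) - phiInt W a x₀ f') x₀ := by
  obtain ⟨c, hc, hcb⟩ := exists_between (max_lt hab hx₀)
  obtain ⟨hac, hx₀c⟩ := max_lt_iff.1 hc
  have hRfun : HasDerivAt (fun x => Rfun q psi'0 W (x - a)) (Zfun q W (x₀ - a)) x₀ :=
    ((hasDerivAt_Zbar hWm (x₀ - a)).comp_sub_const x₀ a).add_const (psi'0 / q)
  have hphi := hasDerivAt_phiInt_Wbar hWm hWneg hWc hac.le hx₀c (hint c hcb)
  refine (((hRfun.const_mul (-C_U)).add_const (f a / q)).sub hphi).congr_of_eventuallyEq ?_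
  filter_upwards [Iio_mem_nhds hx₀] with x hx
  exact vTS_eq_of_le hq hWm hWneg hWc hf hf' hx.le (hint x hx)

theorem vTS_eqOn_Ici :
    EqOn (vTS q psi'0 C_U C_D a b W f)
      (fun x => vTS q psi'0 C_U C_D a b W f b + C_D * (x - b)) (Ici b) := by
  intro x hx
  rcases (mem_Ici.1 hx).eq_or_lt with rfl | hbx
  · simp
  · rw [vTS, if_neg hbx.not_ge, vTS, if_pos le_rfl]

theorem hasDerivAt_vTS_of_gt {x : ℝ} (hbx : b < x) :
    HasDerivAt (vTS q psi'0 C_U C_D a b W f) C_D x := by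
  have hlin := (((hasDerivAt_id x).sub_const b).const_mul C_D).const_add
    (vTS q psi'0 C_U C_D a b W f b)
  simp only [id, mul_one] at hlin
  exact hlin.congr_of_eventuallyEq <|
    eventually_of_mem (Ioi_mem_nhds hbx) fun y hy => vTS_eqOn_Ici (mem_Ici.2 (le_of_lt hy))

theorem hasDerivWithinAt_vTS_Ici {x : ℝ} (hbx : b ≤ x) :
    HasDerivWithinAt (vTS q psi'0 C_U C_D a b W f) C_D (Ici x) x := by
  have hlin := (((hasDerivAt_id x).sub_const b).const_mul C_D).const_add
    (vTS q psi'0 C_U C_D a b W f b)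
  simp only [id, mul_one] at hlin
  exact hlin.hasDerivWithinAt.congr_of_mem (fun y hy => vTS_eqOn_Ici (hbx.trans hy)) self_mem_Ici

end ValueFunction

theorem stmt2_general
    (q : ℝ) (W : ℝ → ℝ)
    (hq : 0 < q)
    (hWnonneg : ∀ x, 0 ≤ W x)
    (hWzero : ∀ x < 0, W x = 0)
    (hWcont : ContinuousOn W (Set.Ici 0))
    (hWmono : StrictMonoOn W (Set.Ici 0))
    (psi'0 : ℝ)
    (C_U C_D : ℝ) (hC : 0 < C_U + C_D)
    (f f' : ℝ → ℝ) (hf : Continuous f)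
    (hf' : ∀ x, HasDerivWithinAt f (f' x) (Set.Ici x) x)
    (a b : ℝ) (hab : a < b)
    (hΛzero : C_D + C_U + phiInt W a b (fun y => f' y + C_U * q) = 0)
    (hΛnonneg : ∀ x ∈ Set.Icc a b,
      0 ≤ C_D + C_U + phiInt W a x (fun y => f' y + C_U * q)) :
    (∀ x < a, HasDerivAt (vTS q psi'0 C_U C_D a b W f) (-C_U) x) ∧
    (∀ x, a < x → x < b →
      HasDerivAt (vTS q psi'0 C_U C_D a b W f)
        (C_D - (C_D + C_U + phiInt W a x (fun y => f' y + C_U * q))) x) ∧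
    (∀ x, b < x → HasDerivAt (vTS q psi'0 C_U C_D a b W f) C_D x) ∧
    (∀ x : ℝ, ∃ d, HasDerivWithinAt (vTS q psi'0 C_U C_D a b W f) d (Set.Ici x) x ∧
      d ≤ C_D) := by
  have hWm := monotone_of_strictMonoOn_Ici (hWnonneg 0) hWzero hWmono
  -- `Λ(a, b) = 0` and `C_U + C_D ≠ 0`, so the integral in `Λ(a, b)` is not the junk value `0`.
  have hΛint := integrableOn_of_phiInt_ne_zero (G := W) (g := fun y => f' y + C_U * q) hab.le
    (by linarith)
  have hint : ∀ z < b, IntegrableOn f' (Ioc a z) := fun z hzb => by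
    have hpos : 0 < W (b - z) :=
      (hWnonneg 0).trans_lt (hWmono self_mem_Ici (sub_nonneg.2 hzb.le) (sub_pos.2 hzb))
    simpa [Pi.sub_def] using (integrableOn_of_integrableOn_kernel_mul hWm hzb.le hpos hΛint).sub
      (integrableOn_const (C := C_U * q) measure_Ioc_lt_top.ne)
  have hderiv := fun x => hasDerivAt_vTS_of_lt (psi'0 := psi'0) (C_U := C_U) (C_D := C_D)
    hq.ne' hWm hWzero hWcont hf hf' hab hint (x₀ := x)
  have hleft : ∀ x ≤ a, HasDerivAt (vTS q psi'0 C_U C_D a b W f) (-C_U) x := fun x hxa => by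
    simpa [Zfun_of_nonpos hWzero (sub_nonpos.2 hxa), phiInt_of_le hWzero hxa] using
      hderiv x (hxa.trans_lt hab)
  have hmid : ∀ x, a < x → x < b → HasDerivAt (vTS q psi'0 C_U C_D a b W f)
      (C_D - (C_D + C_U + phiInt W a x (fun y => f' y + C_U * q))) x := fun x hax hxb => by
    convert hderiv x hxb using 1
    rw [phiInt_add_const hWm hWzero hax.le (hint x hxb), Zfun_eq_one_add_mul_Wbar]
    ring
  refine ⟨fun x hx => hleft x hx.le, hmid, fun x hx => hasDerivAt_vTS_of_gt hx, fun x => ?_⟩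
  rcases le_or_gt x a with hxa | hax
  · exact ⟨-C_U, (hleft x hxa).hasDerivWithinAt, by linarith⟩
  rcases lt_or_ge x b with hxb | hbx
  · exact ⟨_, (hmid x hax hxb).hasDerivWithinAt,
      by linarith [hΛnonneg x ⟨hax.le, hxb.le⟩]⟩
  · exact ⟨C_D, hasDerivWithinAt_vTS_Ici hbx, le_rfl⟩

theorem stmt2
    (γ σ q : ℝ) (ν : Measure ℝ) (W : ℝ → ℝ)
    (hσ : 0 ≤ σ)
    (hνconc : ν (Set.Ici 0) = 0)
    (hνint : Integrable (fun z => min 1 (z ^ 2)) ν)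
    (hψtop : Tendsto (psi γ σ ν) atTop atTop)
    (hq : 0 < q)
    (hΦpos : 0 < PhiQ γ σ ν q)
    (hWnonneg : ∀ x, 0 ≤ W x)
    (hWzero : ∀ x < 0, W x = 0)
    (hWcont : ContinuousOn W (Set.Ici 0))
    (hWmono : StrictMonoOn W (Set.Ici 0))
    (hWlaplace : ∀ s, PhiQ γ σ ν q < s →
      ∫ x in Set.Ioi (0:ℝ), Real.exp (-s * x) * W x = 1 / (psi γ σ ν s - q))
    (psi'0 : ℝ) (hpsi'0 : HasDerivWithinAt (psi γ σ ν) psi'0 (Set.Ici 0) 0)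
    (hW1 : ContDiffOn ℝ 1 W (Set.Ioi 0))
    (C_U C_D : ℝ) (hC : 0 < C_U + C_D)
    (f f' : ℝ → ℝ) (hf : Continuous f)
    (hf' : ∀ x, HasDerivWithinAt f (f' x) (Set.Ici x) x)
    (a b : ℝ) (hab : a < b)
    (hΛzero : C_D + C_U + phiInt W a b (fun y => f' y + C_U * q) = 0)
    (hΛnonneg : ∀ x ∈ Set.Icc a b,
      0 ≤ C_D + C_U + phiInt W a x (fun y => f' y + C_U * q)) :
    (∀ x < a, HasDerivAt (vTS q psi'0 C_U C_D a b W f) (-C_U) x) ∧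
    (∀ x, a < x → x < b →
      HasDerivAt (vTS q psi'0 C_U C_D a b W f)
        (C_D - (C_D + C_U + phiInt W a x (fun y => f' y + C_U * q))) x) ∧
    (∀ x, b < x → HasDerivAt (vTS q psi'0 C_U C_D a b W f) C_D x) ∧
    (∀ x : ℝ, ∃ d, HasDerivWithinAt (vTS q psi'0 C_U C_D a b W f) d (Set.Ici x) x ∧
      d ≤ C_D) :=
  stmt2_general q W hq hWnonneg hWzero hWcont hWmono psi'0 C_U C_D hC f f' hf hf' a b hab hΛzero
    hΛnonneg
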